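/- arXiv:2101.06276 — 2 statements merged into one kernel-verified Lean document; each statement's English description precedes it below -/
import Mathlib

section
/- Let V be a finite-dimensional representation of a finite group G over a field of characteristic 0, and let g, h ∈ G. Then the quotient of V ⊕ V ⊕ V ⊕ V by the subspace spanned by all vectors of the form (v,v,v,v), (v, g·v, 0, 0), and (0, 0, v, h·v) is linearly isomorphic to V_g ⊕ V_h ⊕ V/(V^g + V^h). -/
/-!
Both sides are finite-dimensional of dimension `dim V + dim (V^g ∩ V^h)`, so they are isomorphic.
The span is the image of `V³` under `(u, a, b) ↦ (u + a, u + g a, u + b, u + h b)`, whose kernel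
is a copy of `V^g ∩ V^h`. On the other side, rank–nullity for `1 - g` gives `dim V_g = dim V^g`,
and `dim (V^g + V^h) + dim (V^g ∩ V^h) = dim V^g + dim V^h`.
-/

open Module LinearMap Submodule

namespace QuadQuotient

variable {k V : Type*} [DivisionRing k] [AddCommGroup V] [Module k V]

def quadMap (A B : Module.End k V) : V × V × V →ₗ[k] V × V × V × V where
  toFun x := (x.1 + x.2.1, x.1 + A x.2.1, x.1 + x.2.2, x.1 + B x.2.2)
  map_add' x y := by simp only [Prod.fst_add, Prod.snd_add, map_add, Prod.mk_add_mk]; abel_nf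
  map_smul' c x := by simp [smul_add]

theorem span_quadruples_eq_range_quadMap (A B : Module.End k V) :
    span k ({x : V × V × V × V | ∃ v : V, x = (v, v, v, v)} ∪
        {x | ∃ v : V, x = (v, A v, 0, 0)} ∪ {x | ∃ v : V, x = (0, 0, v, B v)}) =
      range (quadMap A B) := by
  apply le_antisymm
  · rw [span_le]
    rintro _ ((⟨v, rfl⟩ | ⟨v, rfl⟩) | ⟨v, rfl⟩)
    · exact ⟨(v, 0, 0), by simp [quadMap]⟩
    · exact ⟨(0, v, 0), by simp [quadMap]⟩
    · exact ⟨(0, 0, v), by simp [quadMap]⟩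
  · rintro _ ⟨⟨u, a, b⟩, rfl⟩
    have hsum : quadMap A B (u, a, b) = (u, u, u, u) + (a, A a, 0, 0) + (0, 0, b, B b) := by
      simp [quadMap]
    rw [hsum]
    refine add_mem (add_mem ?_ ?_) ?_ <;> refine subset_span ?_
    · exact Or.inl (Or.inl ⟨u, rfl⟩)
    · exact Or.inl (Or.inr ⟨a, rfl⟩)
    · exact Or.inr ⟨b, rfl⟩

theorem ker_quadMap (A B : Module.End k V) :
    ker (quadMap A B) =
      (ker (A - 1) ⊓ ker (B - 1)).map ((-LinearMap.id).prod (LinearMap.id.prod LinearMap.id)) := by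
  ext ⟨u, a, b⟩
  simp only [quadMap, mem_ker, LinearMap.coe_mk, AddHom.coe_mk, Prod.mk_eq_zero, mem_map, mem_inf,
    LinearMap.sub_apply, End.one_apply, sub_eq_zero, LinearMap.prod_apply, LinearMap.coe_neg, id_coe,
    Function.prod_apply, Pi.neg_apply, id_eq, Prod.mk.injEq, ↓existsAndEq, true_and]
  constructor
  · rintro ⟨h1, h2, h3, h4⟩
    obtain rfl : a = -u := (neg_eq_of_add_eq_zero_right h1).symm
    obtain rfl : b = -u := (neg_eq_of_add_eq_zero_right h3).symm
    exact ⟨⟨(neg_eq_of_add_eq_zero_right h2).symm, (neg_eq_of_add_eq_zero_right h4).symm⟩,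
      neg_neg u, rfl⟩
  · rintro ⟨⟨ha, hb⟩, rfl, rfl⟩
    simp [ha, hb]

variable [FiniteDimensional k V]

theorem finrank_quotient_range_one_sub (A : Module.End k V) :
    finrank k (V ⧸ range (1 - A)) = finrank k (ker (A - 1)) := by
  have := (1 - A).finrank_range_add_finrank_ker
  have := (range (1 - A)).finrank_quotient_add_finrank
  rw [← ker_neg, neg_sub]
  omega

theorem finrank_quotient_range_quadMap (A B : Module.End k V) :
    finrank k ((V × V × V × V) ⧸ range (quadMap A B)) =
      finrank k V + finrank k ↥(ker (A - 1) ⊓ ker (B - 1)) := by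
  have hker : finrank k (ker (quadMap A B)) = finrank k ↥(ker (A - 1) ⊓ ker (B - 1)) := by
    rw [ker_quadMap]
    exact (equivMapOfInjective _ (fun x y hxy => congrArg (·.2.1) hxy) _).finrank_eq.symm
  have := (quadMap A B).finrank_range_add_finrank_ker
  have := (range (quadMap A B)).finrank_quotient_add_finrank
  simp only [finrank_prod] at *
  omega

end QuadQuotient

open QuadQuotient

theorem quad_quotient_iso_general
    {k V G : Type*} [Field k] [AddCommGroup V] [Module k V]
    [FiniteDimensional k V] [Group G]
    (ρ : Representation k G V) (g h : G) :
    Nonempty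
      (((V × V × V × V) ⧸ Submodule.span k
          ({x : V × V × V × V | ∃ v : V, x = (v, v, v, v)} ∪
            {x : V × V × V × V | ∃ v : V, x = (v, ρ g v, 0, 0)} ∪
            {x : V × V × V × V | ∃ v : V, x = (0, 0, v, ρ h v)})) ≃ₗ[k]
        ((V ⧸ LinearMap.range ((1 : V →ₗ[k] V) - ρ g)) ×
          (V ⧸ LinearMap.range ((1 : V →ₗ[k] V) - ρ h)) ×
          (V ⧸ (LinearMap.ker (ρ g - (1 : V →ₗ[k] V)) ⊔
            LinearMap.ker (ρ h - (1 : V →ₗ[k] V)))))) := by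
  refine ⟨LinearEquiv.ofFinrankEq _ _ ?_⟩
  rw [span_quadruples_eq_range_quadMap, finrank_quotient_range_quadMap, finrank_prod,
    finrank_prod, finrank_quotient_range_one_sub, finrank_quotient_range_one_sub]
  have := finrank_sup_add_finrank_inf_eq (ker (ρ g - 1)) (ker (ρ h - 1))
  have := (ker (ρ g - 1) ⊔ ker (ρ h - 1)).finrank_quotient_add_finrank
  omega

/-- The quotient of `V⁴` by the span of the vectors `(v,v,v,v)`, `(v,g·v,0,0)`, `(0,0,v,h·v)`
is linearly isomorphic to `V_g ⊕ V_h ⊕ V/(V^g + V^h)`. -/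
theorem quad_quotient_iso
    {k V G : Type*} [Field k] [CharZero k] [AddCommGroup V] [Module k V]
    [FiniteDimensional k V] [Group G] [Finite G]
    (ρ : Representation k G V) (g h : G) :
    Nonempty
      (((V × V × V × V) ⧸ Submodule.span k
          ({x : V × V × V × V | ∃ v : V, x = (v, v, v, v)} ∪
            {x : V × V × V × V | ∃ v : V, x = (v, ρ g v, 0, 0)} ∪
            {x : V × V × V × V | ∃ v : V, x = (0, 0, v, ρ h v)})) ≃ₗ[k]
        ((V ⧸ LinearMap.range ((1 : V →ₗ[k] V) - ρ g)) ×
          (V ⧸ LinearMap.range ((1 : V →ₗ[k] V) - ρ h)) ×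
          (V ⧸ (LinearMap.ker (ρ g - (1 : V →ₗ[k] V)) ⊔
            LinearMap.ker (ρ h - (1 : V →ₗ[k] V)))))) :=
  quad_quotient_iso_general ρ g h
end

section
/- Let V be a finite-dimensional representation of a finite group G over a field of characteristic 0, and g, h ∈ G. There is a short exact sequence 0 → V/(V^g + V^h) → W → V_g ⊕ V_h → 0, where W is the quotient of V ⊕ V ⊕ V by the subspace spanned by all (v - g·v, v, 0) and (0, -v, v - h·v), with the surjection W → V_g ⊕ V_h induced by projection onto the first and third components. -/
/-!
With `f = 1 - g` and `f' = 1 - h` we have `V^g + V^h = ker f + ker f'`, `V_g = coker f`,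
`V_h = coker f'`, and `W` is the cokernel of `(u, w) ↦ (f u, u - w, f' w)`; this works for any
two linear maps `f : M → N₁`, `f' : M → N₂`. A triple `(f u, m, f' w)` differs from
`(0, m - u + w, 0)` by a relation, so the kernel of `W → coker f × coker f'` is the image of `M`;
and `(0, m, 0)` is a relation exactly when `m = u - w` with `f u = 0` and `f' w = 0`, so that
image is `M / (ker f + ker f')`.
-/

open LinearMap Submodule

namespace LinearMap

variable {R M N₁ N₂ : Type*} [Ring R] [AddCommGroup M] [Module R M]
  [AddCommGroup N₁] [Module R N₁] [AddCommGroup N₂] [Module R N₂]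
  (f : M →ₗ[R] N₁) (f' : M →ₗ[R] N₂)

def glue : M × M →ₗ[R] N₁ × M × N₂ :=
  (f.prod (id.prod 0)).coprod ((0 : M →ₗ[R] N₁).prod ((-id).prod f'))

@[simp]
theorem glue_apply (u w : M) : glue f f' (u, w) = (f u, u - w, f' w) := by
  simp [glue, sub_eq_add_neg]

theorem span_union_eq_range_glue :
    span R ({x | ∃ v, x = (f v, v, 0)} ∪ {x | ∃ v, x = (0, -v, f' v)}) = range (glue f f') := by
  have h₁ : {x : N₁ × M × N₂ | ∃ v, x = (f v, v, 0)} =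
      range (f.prod (id.prod (0 : M →ₗ[R] N₂))) := by
    ext x; simp [eq_comm]
  have h₂ : {x : N₁ × M × N₂ | ∃ v, x = (0, -v, f' v)} =
      ↑(range ((0 : M →ₗ[R] N₁).prod ((-id).prod f'))) := by
    ext x; simp [eq_comm]
  rw [span_union, h₁, h₂, span_eq, span_eq, glue, range_coprod]

variable (R N₁ N₂) in
def inMiddle : M →ₗ[R] N₁ × M × N₂ := (0 : M →ₗ[R] N₁).prod (id.prod 0)

@[simp]
theorem inMiddle_apply (m : M) : inMiddle R N₁ N₂ m = (0, m, 0) := rfl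

def outerProj : N₁ × M × N₂ →ₗ[R] (N₁ ⧸ range f) × (N₂ ⧸ range f') :=
  ((range f).mkQ ∘ₗ fst R N₁ (M × N₂)).prod ((range f').mkQ ∘ₗ snd R M N₂ ∘ₗ snd R N₁ (M × N₂))

@[simp]
theorem outerProj_apply (x : N₁ × M × N₂) :
    outerProj f f' x = ((range f).mkQ x.1, (range f').mkQ x.2.2) := rfl

theorem outerProj_surjective : Function.Surjective (outerProj f f') := by
  rintro ⟨x, y⟩
  obtain ⟨n₁, rfl⟩ := (range f).mkQ_surjective x
  obtain ⟨n₂, rfl⟩ := (range f').mkQ_surjective y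
  exact ⟨(n₁, 0, n₂), rfl⟩

theorem inMiddle_mem_range_glue_iff (m : M) :
    inMiddle R N₁ N₂ m ∈ range (glue f f') ↔ m ∈ ker f ⊔ ker f' := by
  simp only [mem_range, Prod.exists, glue_apply, inMiddle_apply, Prod.mk.injEq, mem_sup, mem_ker]
  constructor
  · rintro ⟨u, w, hu, rfl, hw⟩
    exact ⟨u, hu, -w, by simp [hw], (sub_eq_add_neg u w).symm⟩
  · rintro ⟨u, hu, w, hw, rfl⟩
    exact ⟨u, -w, hu, by simp, by simp [hw]⟩

theorem ker_mkQ_comp_inMiddle :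
    ker ((range (glue f f')).mkQ ∘ₗ inMiddle R N₁ N₂) = ker f ⊔ ker f' := by
  ext m
  rw [mem_ker, comp_apply, mkQ_apply, Quotient.mk_eq_zero, inMiddle_mem_range_glue_iff]

theorem ker_outerProj : ker (outerProj f f') = range (inMiddle R N₁ N₂) ⊔ range (glue f f') := by
  refine le_antisymm ?_ (sup_le ?_ ?_)
  · rintro ⟨n₁, m, n₂⟩ hx
    simp only [mem_ker, outerProj_apply, Prod.mk_eq_zero, mkQ_apply, Quotient.mk_eq_zero,
      mem_range] at hx
    obtain ⟨⟨u, rfl⟩, ⟨w, rfl⟩⟩ := hx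
    exact mem_sup.2 ⟨_, mem_range_self _ (m - u + w), _, mem_range_self _ (u, w), by simp⟩
  · rintro _ ⟨m, rfl⟩
    simp
  · rintro _ ⟨⟨u, w⟩, rfl⟩
    simp

theorem range_glue_le_ker_outerProj : range (glue f f') ≤ ker (outerProj f f') :=
  ker_outerProj f f' ▸ le_sup_right

def gluedInclusion :
    (M ⧸ (ker f ⊔ ker f')) →ₗ[R] (N₁ × M × N₂) ⧸ range (glue f f') :=
  (ker f ⊔ ker f').liftQ _ (ker_mkQ_comp_inMiddle f f').ge

def gluedProjection :
    ((N₁ × M × N₂) ⧸ range (glue f f')) →ₗ[R] (N₁ ⧸ range f) × (N₂ ⧸ range f') :=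
  (range (glue f f')).liftQ _ (range_glue_le_ker_outerProj f f')

@[simp]
theorem gluedInclusion_mkQ (m : M) :
    gluedInclusion f f' ((ker f ⊔ ker f').mkQ m) = (range (glue f f')).mkQ (0, m, 0) := rfl

@[simp]
theorem gluedProjection_mkQ (x : N₁ × M × N₂) :
    gluedProjection f f' ((range (glue f f')).mkQ x) =
      ((range f).mkQ x.1, (range f').mkQ x.2.2) := rfl

theorem gluedInclusion_injective : Function.Injective (gluedInclusion f f') :=
  ker_eq_bot.1 (ker_liftQ_eq_bot' _ _ (ker_mkQ_comp_inMiddle f f').symm)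

theorem gluedProjection_surjective : Function.Surjective (gluedProjection f f') := by
  rw [← range_eq_top, gluedProjection, range_liftQ, range_eq_top]
  exact outerProj_surjective f f'

theorem range_gluedInclusion : range (gluedInclusion f f') = ker (gluedProjection f f') := by
  rw [gluedInclusion, gluedProjection, range_liftQ, ker_liftQ, ker_outerProj, Submodule.map_sup,
    mkQ_map_self, sup_bot_eq, range_comp]

end LinearMap

theorem short_exact_triple_quotient_general
    {k V G : Type*} [Field k] [AddCommGroup V] [Module k V]
    [Group G]
    (ρ : Representation k G V) (g h : G) :
    ∃ a : (V ⧸ (LinearMap.ker (ρ g - (1 : V →ₗ[k] V)) ⊔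
          LinearMap.ker (ρ h - (1 : V →ₗ[k] V)))) →ₗ[k]
        ((V × V × V) ⧸ Submodule.span k
          ({x : V × V × V | ∃ v : V, x = (v - ρ g v, v, 0)} ∪
            {x : V × V × V | ∃ v : V, x = (0, -v, v - ρ h v)})),
    ∃ b : ((V × V × V) ⧸ Submodule.span k
          ({x : V × V × V | ∃ v : V, x = (v - ρ g v, v, 0)} ∪
            {x : V × V × V | ∃ v : V, x = (0, -v, v - ρ h v)})) →ₗ[k]
        ((V ⧸ LinearMap.range ((1 : V →ₗ[k] V) - ρ g)) ×
          (V ⧸ LinearMap.range ((1 : V →ₗ[k] V) - ρ h))),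
      Function.Injective a ∧ Function.Surjective b ∧
      LinearMap.range a = LinearMap.ker b ∧
      (∀ v : V,
        a ((LinearMap.ker (ρ g - (1 : V →ₗ[k] V)) ⊔
            LinearMap.ker (ρ h - (1 : V →ₗ[k] V))).mkQ v) =
          (Submodule.span k
            ({x : V × V × V | ∃ v : V, x = (v - ρ g v, v, 0)} ∪
              {x : V × V × V | ∃ v : V, x = (0, -v, v - ρ h v)})).mkQ (0, v, 0)) ∧
      (∀ v₁ v₂ v₃ : V,
        b ((Submodule.span k
            ({x : V × V × V | ∃ v : V, x = (v - ρ g v, v, 0)} ∪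
              {x : V × V × V | ∃ v : V, x = (0, -v, v - ρ h v)})).mkQ (v₁, v₂, v₃)) =
          ((LinearMap.range ((1 : V →ₗ[k] V) - ρ g)).mkQ v₁,
            (LinearMap.range ((1 : V →ₗ[k] V) - ρ h)).mkQ v₃)) := by
  have hspan := span_union_eq_range_glue (1 - ρ g) (1 - ρ h)
  simp only [LinearMap.sub_apply, Module.End.one_apply] at hspan
  rw [← ker_neg (ρ g - 1), neg_sub, ← ker_neg (ρ h - 1), neg_sub, hspan]
  exact ⟨_, _, gluedInclusion_injective _ _, gluedProjection_surjective _ _,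
    range_gluedInclusion _ _, gluedInclusion_mkQ _ _,
    fun v₁ v₂ v₃ => gluedProjection_mkQ _ _ (v₁, v₂, v₃)⟩

/-- Short exact sequence `0 → V/(V^g + V^h) → W → V_g ⊕ V_h → 0`, where `W` is the quotient of
`V³` by the span of all `(v - g·v, v, 0)` and `(0, -v, v - h·v)`; the injection sends the class
of `v` to the class of `(0, v, 0)` and the surjection is induced by projection onto the first
and third components. -/
theorem short_exact_triple_quotient
    {k V G : Type*} [Field k] [CharZero k] [AddCommGroup V] [Module k V]
    [FiniteDimensional k V] [Group G] [Finite G]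
    (ρ : Representation k G V) (g h : G) :
    ∃ a : (V ⧸ (LinearMap.ker (ρ g - (1 : V →ₗ[k] V)) ⊔
          LinearMap.ker (ρ h - (1 : V →ₗ[k] V)))) →ₗ[k]
        ((V × V × V) ⧸ Submodule.span k
          ({x : V × V × V | ∃ v : V, x = (v - ρ g v, v, 0)} ∪
            {x : V × V × V | ∃ v : V, x = (0, -v, v - ρ h v)})),
    ∃ b : ((V × V × V) ⧸ Submodule.span k
          ({x : V × V × V | ∃ v : V, x = (v - ρ g v, v, 0)} ∪
            {x : V × V × V | ∃ v : V, x = (0, -v, v - ρ h v)})) →ₗ[k]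
        ((V ⧸ LinearMap.range ((1 : V →ₗ[k] V) - ρ g)) ×
          (V ⧸ LinearMap.range ((1 : V →ₗ[k] V) - ρ h))),
      Function.Injective a ∧ Function.Surjective b ∧
      LinearMap.range a = LinearMap.ker b ∧
      (∀ v : V,
        a ((LinearMap.ker (ρ g - (1 : V →ₗ[k] V)) ⊔
            LinearMap.ker (ρ h - (1 : V →ₗ[k] V))).mkQ v) =
          (Submodule.span k
            ({x : V × V × V | ∃ v : V, x = (v - ρ g v, v, 0)} ∪
              {x : V × V × V | ∃ v : V, x = (0, -v, v - ρ h v)})).mkQ (0, v, 0)) ∧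
      (∀ v₁ v₂ v₃ : V,
        b ((Submodule.span k
            ({x : V × V × V | ∃ v : V, x = (v - ρ g v, v, 0)} ∪
              {x : V × V × V | ∃ v : V, x = (0, -v, v - ρ h v)})).mkQ (v₁, v₂, v₃)) =
          ((LinearMap.range ((1 : V →ₗ[k] V) - ρ g)).mkQ v₁,
            (LinearMap.range ((1 : V →ₗ[k] V) - ρ h)).mkQ v₃)) :=
  short_exact_triple_quotient_general ρ g h
end
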